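/- Let g, h : ℝ⁴ → Matrix (Fin 4) (Fin 4) ℝ be C² maps such that g(x) is symmetric and invertible for every x and h(x) is symmetric for every x. For a matrix-valued map G (with G(x) invertible) define the Christoffel symbols Γ[G]^k_{ij}(x) = (1/2) Σ_{r} (G(x)⁻¹)^{kr} (∂_i G_{rj}(x) + ∂_j G_{ir}(x) − ∂_r G_{ij}(x)), and define the covariant derivative of h with respect to g by ∇_i h_{jk}(x) = ∂_i h_{jk}(x) − Σ_s Γ[g]^s_{ij}(x) h_{sk}(x) − Σ_s Γ[g]^s_{ik}(x) h_{js}(x). Then for every x ∈ ℝ⁴ and all indices i, j, k ∈ Fin 4, the function ε ↦ Γ[g − ε·h]^k_{ij}(x) is differentiable at ε = 0 with derivative −(1/2) Σ_{r} (g(x)⁻¹)^{kr} (∇_i h_{rj}(x) + ∇_j h_{ir}(x) − ∇_r h_{ij}(x)). -/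

import Mathlib

open Matrix

/-- The partial derivative `∂_i φ (x)` of a real-valued function on `ℝ⁴` along the `i`-th
standard basis vector. -/
noncomputable def pd (i : Fin 4) (φ : (Fin 4 → ℝ) → ℝ) (x : Fin 4 → ℝ) : ℝ :=
  fderiv ℝ φ x (Pi.single i 1)

/-- The Christoffel symbols `Γ[G]^k_{ij}(x)` of a matrix-valued map `G`. -/
noncomputable def christoffel (G : (Fin 4 → ℝ) → Matrix (Fin 4) (Fin 4) ℝ)
    (k i j : Fin 4) (x : Fin 4 → ℝ) : ℝ :=
  (1/2) * ∑ r : Fin 4, (G x)⁻¹ k r *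
    (pd i (fun y => G y r j) x + pd j (fun y => G y i r) x - pd r (fun y => G y i j) x)

/-- The covariant derivative `∇_i h_{jk}(x)` of `h` with respect to the metric `g`. -/
noncomputable def covDeriv (g h : (Fin 4 → ℝ) → Matrix (Fin 4) (Fin 4) ℝ)
    (i j k : Fin 4) (x : Fin 4 → ℝ) : ℝ :=
  pd i (fun y => h y j k) x
    - ∑ s : Fin 4, christoffel g s i j x * h x s k
    - ∑ s : Fin 4, christoffel g s i k x * h x j s

/-!
Write `Γ[G]^k_{ij} = ∑ r, (G⁻¹)^{kr} Γ[G]_{r,ij}` with the Christoffel symbols of the first kind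
`Γ[G]_{r,ij}`, which are linear in `G`. Since `(g - ε h)⁻¹` has derivative `g⁻¹ h g⁻¹` at `ε = 0`,
the derivative of `Γ[g - ε h]^k_{ij}` is `(g⁻¹ h g⁻¹ Γ[g]_{·,ij})^k - (g⁻¹ Γ[h]_{·,ij})^k`. On the
other side, the symmetry of `h` and of `Γ[g]` in its lower indices collapses
`∇_i h_{rj} + ∇_j h_{ir} - ∇_r h_{ij}` to `2 (Γ[h]_{r,ij} - h_{rs} Γ[g]^s_{ij})`, and
`Γ[g]^s_{ij} = (g⁻¹ Γ[g]_{·,ij})^s` turns the claimed derivative into the same expression.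
-/

theorem Matrix.hasDerivAt_inv_sub_smul_apply {n : Type*} [Fintype n] [DecidableEq n]
    {X : Matrix n n ℝ} (H : Matrix n n ℝ) (hX : IsUnit X.det) (k r : n) :
    HasDerivAt (fun ε : ℝ => (X - ε • H)⁻¹ k r) ((X⁻¹ * H * X⁻¹) k r) 0 := by
  -- Any norm will do: the statement is norm-free, and entries are continuous linear for all norms.
  let : NormedRing (Matrix n n ℝ) := Matrix.linftyOpNormedRing
  let : NormedAlgebra ℝ (Matrix n n ℝ) := Matrix.linftyOpNormedAlgebra
  have : CompleteSpace (Matrix n n ℝ) := FiniteDimensional.complete ℝ _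
  obtain ⟨u, rfl⟩ := (isUnit_iff_isUnit_det X).2 hX
  have hline := ((hasDerivAt_id (0 : ℝ)).smul_const H).const_sub (u : Matrix n n ℝ)
  simp only [id_eq, one_smul] at hline
  have hinv := (hasFDerivAt_ringInverse (𝕜 := ℝ) u).comp_hasDerivAt_of_eq 0 hline (by simp)
  simp only [Function.comp_def, ← nonsing_inv_eq_ringInverse] at hinv
  refine ((entryLinearMap ℝ ℝ k r).toContinuousLinearMap.hasFDerivAt.comp_hasDerivAt 0
    hinv).congr_deriv ?_
  simp [coe_units_inv]
  rfl

theorem Matrix.hasDerivAt_inv_sub_smul_mulVec_sub_smul {n : Type*} [Fintype n] [DecidableEq n]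
    {X : Matrix n n ℝ} (H : Matrix n n ℝ) (hX : IsUnit X.det) (a b : n → ℝ) (k : n) :
    HasDerivAt (fun ε : ℝ => ((X - ε • H)⁻¹ *ᵥ (a - ε • b)) k)
      (((X⁻¹ * H * X⁻¹) *ᵥ a) k - (X⁻¹ *ᵥ b) k) 0 := by
  have hterm (r : n) : HasDerivAt (fun ε : ℝ => (X - ε • H)⁻¹ k r * (a r - ε * b r))
      ((X⁻¹ * H * X⁻¹) k r * a r - X⁻¹ k r * b r) 0 := by
    refine ((hasDerivAt_inv_sub_smul_apply H hX k r).fun_mul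
      (((hasDerivAt_id' (0 : ℝ)).mul_const (b r)).const_sub (a r))).congr_deriv ?_
    simp [sub_eq_add_neg]
  simpa [mulVec, dotProduct] using HasDerivAt.fun_sum fun r _ => hterm r

noncomputable def christoffelFirstKind (G : (Fin 4 → ℝ) → Matrix (Fin 4) (Fin 4) ℝ)
    (r i j : Fin 4) (x : Fin 4 → ℝ) : ℝ :=
  (1/2) * (pd i (fun y => G y r j) x + pd j (fun y => G y i r) x - pd r (fun y => G y i j) x)

theorem christoffel_eq_mulVec (G : (Fin 4 → ℝ) → Matrix (Fin 4) (Fin 4) ℝ)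
    (i j : Fin 4) (x : Fin 4 → ℝ) :
    (fun k => christoffel G k i j x) = (G x)⁻¹ *ᵥ fun r => christoffelFirstKind G r i j x := by
  ext k
  simp only [christoffel, christoffelFirstKind, mulVec, dotProduct, Finset.mul_sum]
  exact Finset.sum_congr rfl fun r _ => by ring

theorem christoffelFirstKind_comm {G : (Fin 4 → ℝ) → Matrix (Fin 4) (Fin 4) ℝ}
    (hG : ∀ y, (G y).IsSymm) (r i j : Fin 4) (x : Fin 4 → ℝ) :
    christoffelFirstKind G r i j x = christoffelFirstKind G r j i x := by
  have hswap (a b : Fin 4) : (fun y => G y a b) = fun y => G y b a :=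
    funext fun y => (hG y).apply b a
  simp only [christoffelFirstKind, hswap r j, hswap i r, hswap i j]
  ring

theorem christoffel_comm {G : (Fin 4 → ℝ) → Matrix (Fin 4) (Fin 4) ℝ}
    (hG : ∀ y, (G y).IsSymm) (k i j : Fin 4) (x : Fin 4 → ℝ) :
    christoffel G k i j x = christoffel G k j i x := by
  calc christoffel G k i j x = ((G x)⁻¹ *ᵥ fun r => christoffelFirstKind G r i j x) k :=
        congrFun (christoffel_eq_mulVec G i j x) k
    _ = ((G x)⁻¹ *ᵥ fun r => christoffelFirstKind G r j i x) k := by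
        simp only [christoffelFirstKind_comm hG _ i j]
    _ = christoffel G k j i x := (congrFun (christoffel_eq_mulVec G j i x) k).symm

theorem pd_sub_const_mul {φ ψ : (Fin 4 → ℝ) → ℝ} {x : Fin 4 → ℝ} (hφ : DifferentiableAt ℝ φ x)
    (hψ : DifferentiableAt ℝ ψ x) (c : ℝ) (i : Fin 4) :
    pd i (fun y => φ y - c * ψ y) x = pd i φ x - c * pd i ψ x := by
  simp [pd, fderiv_fun_sub hφ (hψ.const_mul c), fderiv_const_mul hψ]

theorem christoffelFirstKind_sub_smul {g h : (Fin 4 → ℝ) → Matrix (Fin 4) (Fin 4) ℝ}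
    {x : Fin 4 → ℝ} (hg : ∀ a b, DifferentiableAt ℝ (fun y => g y a b) x)
    (hh : ∀ a b, DifferentiableAt ℝ (fun y => h y a b) x) (ε : ℝ) (i j : Fin 4) :
    (fun r => christoffelFirstKind (fun y => g y - ε • h y) r i j x)
      = (fun r => christoffelFirstKind g r i j x)
          - ε • fun r => christoffelFirstKind h r i j x := by
  have hpd (m a b : Fin 4) : pd m (fun y => (g y - ε • h y) a b) x
      = pd m (fun y => g y a b) x - ε * pd m (fun y => h y a b) x :=
    pd_sub_const_mul (hg a b) (hh a b) ε m
  ext r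
  simp only [christoffelFirstKind, hpd, Pi.sub_apply, Pi.smul_apply, smul_eq_mul]
  ring

theorem covDeriv_add_covDeriv_sub_covDeriv {g h : (Fin 4 → ℝ) → Matrix (Fin 4) (Fin 4) ℝ}
    (hg : ∀ y, (g y).IsSymm) {x : Fin 4 → ℝ} (hh : (h x).IsSymm) (i j : Fin 4) :
    (fun r => covDeriv g h i r j x + covDeriv g h j i r x - covDeriv g h r i j x)
      = (2 : ℝ) • ((fun r => christoffelFirstKind h r i j x)
          - h x *ᵥ fun s => christoffel g s i j x) := by
  ext r
  simp only [covDeriv, christoffelFirstKind, Pi.smul_apply, Pi.sub_apply, mulVec, dotProduct,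
    smul_eq_mul, christoffel_comm hg _ i r, christoffel_comm hg _ j r,
    christoffel_comm hg _ j i, hh.apply r, mul_comm (h x r _)]
  ring

/-- For `C²` maps `g, h` with `g x` symmetric invertible and `h x` symmetric,
the Christoffel symbols of the deformed metric `g - ε • h` are differentiable in `ε` at
`ε = 0` with derivative
`-(1/2) ∑_r (g x)⁻¹^{kr} (∇_i h_{rj} + ∇_j h_{ir} - ∇_r h_{ij})(x)`. -/
theorem metric_connection_variation
    (g h : (Fin 4 → ℝ) → Matrix (Fin 4) (Fin 4) ℝ)
    (hgC2 : ∀ i j : Fin 4, ContDiff ℝ 2 (fun x => g x i j))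
    (hhC2 : ∀ i j : Fin 4, ContDiff ℝ 2 (fun x => h x i j))
    (hgsymm : ∀ x, (g x).IsSymm) (hginv : ∀ x, IsUnit (g x).det)
    (hhsymm : ∀ x, (h x).IsSymm) :
    ∀ (x : Fin 4 → ℝ) (i j k : Fin 4),
      HasDerivAt (fun ε : ℝ => christoffel (fun y => g y - ε • h y) k i j x)
        (-(1/2) * ∑ r : Fin 4, (g x)⁻¹ k r *
          (covDeriv g h i r j x + covDeriv g h j i r x - covDeriv g h r i j x))
        0 := by
  intro x i j k
  have hgdiff a b := (hgC2 a b).differentiable two_ne_zero x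
  have hhdiff a b := (hhC2 a b).differentiable two_ne_zero x
  have hfamily : (fun ε : ℝ => christoffel (fun y => g y - ε • h y) k i j x)
      = fun ε : ℝ => ((g x - ε • h x)⁻¹ *ᵥ ((fun r => christoffelFirstKind g r i j x)
          - ε • fun r => christoffelFirstKind h r i j x)) k := by
    funext ε
    rw [← christoffelFirstKind_sub_smul hgdiff hhdiff]
    exact congrFun (christoffel_eq_mulVec _ i j x) k
  rw [hfamily]
  convert hasDerivAt_inv_sub_smul_mulVec_sub_smul (h x) (hginv x) _ _ k using 1
  calc -(1/2) * ∑ r, (g x)⁻¹ k r *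
        (covDeriv g h i r j x + covDeriv g h j i r x - covDeriv g h r i j x)
      = -(1/2) * ((g x)⁻¹ *ᵥ fun r =>
          covDeriv g h i r j x + covDeriv g h j i r x - covDeriv g h r i j x) k := rfl
    _ = _ := by
      rw [covDeriv_add_covDeriv_sub_covDeriv hgsymm (hhsymm x), christoffel_eq_mulVec,
        mulVec_smul, mulVec_sub, mulVec_mulVec, mulVec_mulVec, Matrix.mul_assoc]
      simp only [Pi.smul_apply, Pi.sub_apply, smul_eq_mul]
      ring
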